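/- Let JF be a complementary justification frame and τ a positional strategy for player F in the game graph G_JF. For any defined fact x, the play graph of τ in x with rule symbols filtered out and every node label y replaced by ~y is a connected, locally complete graph-like justification with ~x as a root in JF. -/

import Mathlib

namespace JT

open scoped Classical

/-- Three truth values: 0 = 𝐟, 1 = 𝐮, 2 = 𝐭, with the truth order. -/
abbrev TV := Fin 3

/-- Complement on truth values: swaps 𝐭 and 𝐟, fixes 𝐮. -/
def TV.neg (v : TV) : TV := 2 - v

/-- A justification frame over a fact space `F`. -/
structure JFrame (F : Type) where
  compl : F → F
  compl_invol : ∀ x, compl (compl x) = x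
  tLit : F
  fLit : F
  uLit : F
  compl_t : compl tLit = fLit
  compl_u : compl uLit = uLit
  lit_distinct : tLit ≠ fLit ∧ tLit ≠ uLit ∧ fLit ≠ uLit
  defined : Set F
  defined_compl : ∀ x ∈ defined, compl x ∈ defined
  t_not_def : tLit ∉ defined
  f_not_def : fLit ∉ defined
  u_not_def : uLit ∉ defined
  rules : Set (F × Set F)
  rules_head : ∀ r ∈ rules, r.1 ∈ defined
  rules_body_ne : ∀ r ∈ rules, r.2.Nonempty
  rules_ex : ∀ x ∈ defined, ∃ A : Set F, (x, A) ∈ rules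

variable {F : Type}

def JFrame.openF (JF : JFrame F) : Set F := JF.definedᶜ

/-- A (three-valued) interpretation of the fact space. -/
structure Interp (JF : JFrame F) where
  val : F → TV
  val_compl : ∀ x, val (JF.compl x) = TV.neg (val x)
  val_t : val JF.tLit = 2
  val_f : val JF.fLit = 0
  val_u : val JF.uLit = 1

/-- Branches: finite (the whole finite sequence, as a list) or infinite. -/
inductive Branch (F : Type) where
  | fin : List F → Branch F
  | inf : (ℕ → F) → Branch F

def Branch.startsAt : Branch F → F → Prop
  | .fin l, x => l.head? = some x
  | .inf s, x => s 0 = x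

/-- `b` is a `JF`-branch: an infinite sequence in `F_d`, or a finite nonempty
sequence in `F_d` followed by an open fact. -/
def JFrame.IsBranch (JF : JFrame F) : Branch F → Prop
  | .fin l => 2 ≤ l.length ∧ (∀ a ∈ l.dropLast, a ∈ JF.defined) ∧
      (∀ e, l.getLast? = some e → e ∉ JF.defined)
  | .inf s => ∀ n, s n ∈ JF.defined

/-- Prepend a finite path `p` to a branch. -/
def Branch.prepend (p : List F) : Branch F → Branch F
  | .fin l => .fin (p ++ l)
  | .inf s => .inf (fun n => if h : n < p.length then p.get ⟨n, h⟩ else s (n - p.length))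

/-- Elementwise complement of a branch. -/
def Branch.compl (JF : JFrame F) : Branch F → Branch F
  | .fin l => .fin (l.map JF.compl)
  | .inf s => .inf (fun n => JF.compl (s n))

/-- A branch evaluation is consistent if `B(~b) = ~B(b)`. -/
def JFrame.ConsistentBE (JF : JFrame F) (B : Branch F → F) : Prop :=
  ∀ b : Branch F, JF.IsBranch b → B (Branch.compl JF b) = JF.compl (B b)

/-- A graph-like justification (labels are injective, so nodes are facts). -/
structure GraphJust (JF : JFrame F) where
  nodes : Set F
  edges : Set (F × F)
  edges_mem : ∀ e ∈ edges, e.1 ∈ nodes ∧ e.2 ∈ nodes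
  rule_of_internal : ∀ x ∈ nodes, (∃ y, (x, y) ∈ edges) →
      (x, {y | (x, y) ∈ edges}) ∈ JF.rules

namespace GraphJust
variable {JF : JFrame F}

def LocallyComplete (J : GraphJust JF) : Prop :=
  ∀ x ∈ J.nodes, x ∈ JF.defined → ∃ y, (x, y) ∈ J.edges

def Connected (J : GraphJust JF) : Prop :=
  ∀ x ∈ J.nodes, ∀ y ∈ J.nodes,
    Relation.ReflTransGen (fun a b => (a, b) ∈ J.edges ∨ (b, a) ∈ J.edges) x y

def IsRoot (J : GraphJust JF) (x : F) : Prop :=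
  x ∈ J.nodes ∧ ∀ y ∈ J.nodes, Relation.ReflTransGen (fun a b => (a, b) ∈ J.edges) x y

/-- `J`-branches starting in `x`: maximal paths in `J` from `x`. -/
def IsBranchFrom (J : GraphJust JF) (x : F) : Branch F → Prop
  | .fin l => l.head? = some x ∧ (∀ a ∈ l, a ∈ J.nodes) ∧
      List.Chain' (fun a b => (a, b) ∈ J.edges) l ∧
      (∀ e, l.getLast? = some e → ∀ y, (e, y) ∉ J.edges)
  | .inf s => s 0 = x ∧ (∀ n, s n ∈ J.nodes) ∧ (∀ n, (s n, s (n+1)) ∈ J.edges)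

/-- The value of `x` by `J` under `I`. -/
noncomputable def val (J : GraphJust JF) (B : Branch F → F) (x : F) (I : Interp JF) : TV :=
  ⨅ b ∈ {b | J.IsBranchFrom x b}, I.val (B b)

end GraphJust

/-- Underlying undirected simple graph of a directed relation. -/
def symGraph {α : Type} (e : α → α → Prop) : SimpleGraph α where
  Adj a b := a ≠ b ∧ (e a b ∨ e b a)
  symm := ⟨fun _ _ h => ⟨Ne.symm h.1, h.2.symm⟩⟩
  loopless := ⟨fun _ h => h.1 rfl⟩

/-- A tree-like justification: a directed labelled graph whose underlying
undirected graph is a forest. -/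
structure TreeJust (JF : JFrame F) where
  Node : Type
  edge : Node → Node → Prop
  label : Node → F
  rule_of_internal : ∀ n, (∃ m, edge n m) →
      (label n, {y | ∃ m, edge n m ∧ label m = y}) ∈ JF.rules
  forest : (symGraph edge).IsAcyclic

namespace TreeJust
variable {JF : JFrame F}

def LocallyComplete (T : TreeJust JF) : Prop :=
  ∀ n, T.label n ∈ JF.defined → ∃ m, T.edge n m

def Connected (T : TreeJust JF) : Prop :=
  ∀ a b : T.Node, Relation.ReflTransGen (fun u v => T.edge u v ∨ T.edge v u) a b

def IsRoot (T : TreeJust JF) (x : F) : Prop :=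
  ∃ n, T.label n = x ∧ ∀ m, Relation.ReflTransGen T.edge n m

def IsBranchFrom (T : TreeJust JF) (x : F) : Branch F → Prop
  | .fin l => ∃ ns : List T.Node, List.Chain' T.edge ns ∧ ns.map T.label = l ∧
      l.head? = some x ∧ (∀ nl, ns.getLast? = some nl → ∀ m, ¬ T.edge nl m)
  | .inf s => ∃ ns : ℕ → T.Node, (∀ n, T.edge (ns n) (ns (n+1))) ∧
      (∀ n, T.label (ns n) = s n) ∧ s 0 = x

noncomputable def val (T : TreeJust JF) (B : Branch F → F) (x : F) (I : Interp JF) : TV :=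
  ⨅ b ∈ {b | T.IsBranchFrom x b}, I.val (B b)

end TreeJust

/-- Graph-like supported value. -/
noncomputable def SVg (JF : JFrame F) (B : Branch F → F) (x : F) (I : Interp JF) : TV :=
  if x ∈ JF.defined then
    ⨆ J ∈ {J : GraphJust JF | J.LocallyComplete ∧ x ∈ J.nodes}, J.val B x I
  else I.val x

/-- Tree-like supported value. -/
noncomputable def SVt (JF : JFrame F) (B : Branch F → F) (x : F) (I : Interp JF) : TV :=
  if x ∈ JF.defined then
    ⨆ (T : TreeJust JF) (_ : T.LocallyComplete ∧ ∃ n, T.label n = x), T.val B x I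
  else I.val x

/-! ### Games -/

/-- A game graph: states owned by player 𝐓 (`T`) or by player 𝐅 (`Tᶜ`), edges `E`. -/
structure GameGraph (S : Type) where
  T : Set S
  E : Set (S × S)

namespace GameGraph
variable {S : Type}

def IsPath (G : GameGraph S) (p : List S) : Prop :=
  p ≠ [] ∧ List.Chain' (fun a b => (a, b) ∈ G.E) p

end GameGraph

/-- A general strategy for the player owning the states in `P`. -/
structure GenStrat {S : Type} (G : GameGraph S) (P : Set S) where
  next : List S → S
  next_ok : ∀ p s, G.IsPath p → p.getLast? = some s → s ∈ P →
      (∃ t2, (s, t2) ∈ G.E) → (s, next p) ∈ G.E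

/-- A positional strategy for the player owning the states in `P`. -/
structure PosStrat {S : Type} (G : GameGraph S) (P : Set S) where
  move : S → S
  move_ok : ∀ s ∈ P, (∃ t2, (s, t2) ∈ G.E) → (s, move s) ∈ G.E

/-- The embedding of positional strategies into general strategies. -/
noncomputable def PosStrat.toGen {S : Type} [Nonempty S] {G : GameGraph S} {P : Set S}
    (σ : PosStrat G P) : GenStrat G P where
  next p := σ.move (p.getLastD (Classical.arbitrary S))
  next_ok := by
    intro p s _ hlast hsP hout
    have h : p.getLastD (Classical.arbitrary S) = s := by
      rw [List.getLastD_eq_getLast?, hlast]; rfl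
    show (s, σ.move (p.getLastD (Classical.arbitrary S))) ∈ G.E
    rw [h]; exact σ.move_ok s hsP hout

/-- The finite prefixes of the unique play from `x` consistent with both strategies. -/
noncomputable def GameGraph.playPrefix {S : Type} (G : GameGraph S)
    (σ : GenStrat G G.T) (τ : GenStrat G G.Tᶜ) (x : S) : ℕ → List S
  | 0 => [x]
  | n + 1 =>
    let p := G.playPrefix σ τ x n
    match p.getLast? with
    | none => p
    | some s =>
      if (∃ t2, (s, t2) ∈ G.E) then
        p ++ [if s ∈ G.T then σ.next p else τ.next p]
      else p

/-- The trace of the play from `x`: the state at each time step, if any. -/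
noncomputable def GameGraph.playTrace {S : Type} (G : GameGraph S)
    (σ : GenStrat G G.T) (τ : GenStrat G G.Tᶜ) (x : S) : ℕ → Option S :=
  fun n => (G.playPrefix σ τ x n)[n]?

/-- Value of the play from `x`, for a valuation `v` of plays (given by traces). -/
noncomputable def GameGraph.uval {S V : Type} [CompleteLinearOrder V] (G : GameGraph S)
    (v : (ℕ → Option S) → V) (x : S) (σ : GenStrat G G.T) (τ : GenStrat G G.Tᶜ) : V :=
  v (G.playTrace σ τ x)

/-- Optimal pair of strategies. -/
def GameGraph.OptimalPair {S V : Type} [CompleteLinearOrder V] (G : GameGraph S)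
    (v : (ℕ → Option S) → V) (σs : GenStrat G G.T) (τs : GenStrat G G.Tᶜ) : Prop :=
  ∀ s : S, (∀ σ, G.uval v s σ τs ≤ G.uval v s σs τs) ∧
    (∀ τ, G.uval v s σs τs ≤ G.uval v s σs τ)

/-! ### The justification game -/

/-- Rule symbols `r_{x ← A}`. -/
def RuleSym (JF : JFrame F) : Type := {r : F × Set F // r ∈ JF.rules}

/-- States of the justification game: facts (owned by 𝐓) and rule symbols (owned by 𝐅). -/
abbrev GState (JF : JFrame F) : Type := F ⊕ RuleSym JF

instance (JF : JFrame F) : Nonempty (GState JF) := ⟨Sum.inl JF.tLit⟩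

/-- The game graph `G_JF` associated to a justification frame. -/
def JFrame.game (JF : JFrame F) : GameGraph (GState JF) where
  T := Set.range Sum.inl
  E := {e | (∃ (x : F) (r : RuleSym JF), e = (Sum.inl x, Sum.inr r) ∧ r.1.1 = x) ∨
            (∃ (r : RuleSym JF) (y : F), e = (Sum.inr r, Sum.inl y) ∧ y ∈ r.1.2)}

/-- The `JF`-branch obtained from the play from `s` by filtering out rule symbols. -/
noncomputable def JFrame.playBranch (JF : JFrame F)
    (σ : GenStrat JF.game JF.game.T) (τ : GenStrat JF.game JF.game.Tᶜ)
    (s : GState JF) : Branch F :=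
  if h : ∃ n, JF.game.playPrefix σ τ s (n+1) = JF.game.playPrefix σ τ s n then
    .fin ((JF.game.playPrefix σ τ s (Nat.find h)).filterMap Sum.getLeft?)
  else
    .inf (fun k => ((JF.game.playPrefix σ τ s (2*k+2)).filterMap Sum.getLeft?).getD k JF.tLit)

/-- `u(s, σ, τ) = I(B(b_{play(s,σ,τ)}))`. -/
noncomputable def JFrame.uS (JF : JFrame F) (B : Branch F → F) (I : Interp JF)
    (s : GState JF) (σ : GenStrat JF.game JF.game.T) (τ : GenStrat JF.game JF.game.Tᶜ) : TV :=
  I.val (B (JF.playBranch σ τ s))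

/-- Optimal pair of strategies in the justification game `G_{JS,I}`. -/
def JFrame.OptPair (JF : JFrame F) (B : Branch F → F) (I : Interp JF)
    (σs : GenStrat JF.game JF.game.T) (τs : GenStrat JF.game JF.game.Tᶜ) : Prop :=
  ∀ s : GState JF, (∀ σ, JF.uS B I s σ τs ≤ JF.uS B I s σs τs) ∧
    (∀ τ, JF.uS B I s σs τs ≤ JF.uS B I s σs τ)

/-! ### Play graphs of positional strategies, filtered -/

/-- Steps consistent with a positional strategy for 𝐓. -/
def JFrame.stepT (JF : JFrame F) (σ : PosStrat JF.game JF.game.T)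
    (a b : GState JF) : Prop :=
  (a, b) ∈ JF.game.E ∧ (a ∈ JF.game.T → b = σ.move a)

def JFrame.reachT (JF : JFrame F) (σ : PosStrat JF.game JF.game.T) (x : F) :
    Set (GState JF) :=
  {s | Relation.ReflTransGen (JF.stepT σ) (Sum.inl x) s}

/-- Nodes of the play graph of `σ` at `x` with rule symbols filtered out. -/
def JFrame.filtNodesT (JF : JFrame F) (σ : PosStrat JF.game JF.game.T) (x : F) : Set F :=
  {y | Sum.inl y ∈ JF.reachT σ x}

/-- Edges of the play graph of `σ` at `x` with rule symbols filtered out. -/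
def JFrame.filtEdgesT (JF : JFrame F) (σ : PosStrat JF.game JF.game.T) (x : F) :
    Set (F × F) :=
  {e | ∃ r : RuleSym JF, Sum.inl e.1 ∈ JF.reachT σ x ∧
      JF.stepT σ (Sum.inl e.1) (Sum.inr r) ∧ JF.stepT σ (Sum.inr r) (Sum.inl e.2)}

/-- Steps consistent with a positional strategy for 𝐅. -/
def JFrame.stepF (JF : JFrame F) (τ : PosStrat JF.game JF.game.Tᶜ)
    (a b : GState JF) : Prop :=
  (a, b) ∈ JF.game.E ∧ (a ∈ JF.game.Tᶜ → b = τ.move a)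

def JFrame.reachF (JF : JFrame F) (τ : PosStrat JF.game JF.game.Tᶜ) (x : F) :
    Set (GState JF) :=
  {s | Relation.ReflTransGen (JF.stepF τ) (Sum.inl x) s}

/-- Nodes of the play graph of `τ` at `x`, rule symbols filtered out, labels negated. -/
def JFrame.filtNodesF (JF : JFrame F) (τ : PosStrat JF.game JF.game.Tᶜ) (x : F) : Set F :=
  {w | ∃ y : F, w = JF.compl y ∧ Sum.inl y ∈ JF.reachF τ x}

/-- Edges of the play graph of `τ` at `x`, rule symbols filtered out, labels negated. -/
def JFrame.filtEdgesF (JF : JFrame F) (τ : PosStrat JF.game JF.game.Tᶜ) (x : F) :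
    Set (F × F) :=
  {e | ∃ (y z : F) (r : RuleSym JF), e = (JF.compl y, JF.compl z) ∧
      Sum.inl y ∈ JF.reachF τ x ∧
      JF.stepF τ (Sum.inl y) (Sum.inr r) ∧ JF.stepF τ (Sum.inr r) (Sum.inl z)}

/-! ### Complementation -/

/-- A selection function for `x` chooses an element from the body of each rule of `x`. -/
def JFrame.SelectionFn (JF : JFrame F) (x : F) : Type :=
  {s : {A : Set F // (x, A) ∈ JF.rules} → F // ∀ A, s A ∈ A.1}

/-- `JF` is complementary: fixed under complementation, i.e. for each defined `x` and
selection function `s` for `x`, the rule `~x ← ~Im(s)` belongs to the rules. -/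
def JFrame.Complementary (JF : JFrame F) : Prop :=
  ∀ x ∈ JF.defined, ∀ s : JF.SelectionFn x,
    (JF.compl x, JF.compl '' Set.range s.1) ∈ JF.rules

/-! ### Monotone, selective, transitive branch evaluations -/

/-- Monotone branch evaluation. -/
def JFrame.MonotoneBE (JF : JFrame F) (B : Branch F → F) : Prop :=
  ∀ (I : Interp JF) (x : F), x ∈ JF.defined →
    ∀ b1 b2 : Branch F, JF.IsBranch b1 → JF.IsBranch b2 →
      b1.startsAt x → b2.startsAt x →
      ∀ p : List F, (∀ a ∈ p, a ∈ JF.defined) →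
        I.val (B b1) ≤ I.val (B b2) →
        I.val (B (Branch.prepend p b1)) ≤ I.val (B (Branch.prepend p b2))

/-- Transitive branch evaluation: dropping the first element of a branch with at
least three elements does not change its value. -/
def JFrame.TransitiveBE (JF : JFrame F) (B : Branch F → F) : Prop :=
  ∀ (x0 : F) (b : Branch F), JF.IsBranch b → B (Branch.prepend [x0] b) = B b

/-- A finite loop starting in `x`. -/
def JFrame.IsLoopAt (JF : JFrame F) (x : F) (q : List F) : Prop :=
  q.head? = some x ∧ ∀ a ∈ q, a ∈ JF.defined

/-- Finite iterations of loops from `L`. -/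
def FinIter (L : Set (List F)) : Set (List F) :=
  {w | ∃ ls : List (List F), (∀ l ∈ ls, l ∈ L) ∧ w = ls.flatten}

/-- `s` is the concatenation of the infinite sequence of lists `f`. -/
def IsConcat (f : ℕ → List F) (s : ℕ → F) : Prop :=
  ∃ c : ℕ → ℕ, c 0 = 0 ∧ (∀ i, c (i+1) = c i + (f i).length) ∧
    ∀ i k (h : k < (f i).length), s (c i + k) = (f i).get ⟨k, h⟩

/-- `L^ω`: infinite iterations of loops from `L`, as branches. -/
def InfIter (L : Set (List F)) : Set (Branch F) :=
  {b | ∃ (f : ℕ → List F) (s : ℕ → F), (∀ i, f i ∈ L) ∧ (∀ i, f i ≠ []) ∧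
      IsConcat f s ∧ b = .inf s}

/-- `p L* K`. -/
def StarKSet (p : List F) (L : Set (List F)) (K : Set (Branch F)) : Set (Branch F) :=
  {b | ∃ w ∈ FinIter L, ∃ k ∈ K, b = Branch.prepend (p ++ w) k}

/-- `p L^ω`. -/
def OmegaSet (p : List F) (L : Set (List F)) : Set (Branch F) :=
  {b | ∃ b0 ∈ InfIter L, b = Branch.prepend p b0}

/-- `p K`. -/
def PrepSet (p : List F) (K : Set (Branch F)) : Set (Branch F) :=
  (Branch.prepend p) '' K

/-- Selective branch evaluation with respect to `I`. -/
def JFrame.SelectiveBE (JF : JFrame F) (B : Branch F → F) (I : Interp JF) : Prop :=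
  ∀ p : List F, (∀ a ∈ p, a ∈ JF.defined) →
  ∀ x ∈ JF.defined,
  ∀ M N : Set (List F), (∀ q ∈ M, JF.IsLoopAt x q) → (∀ q ∈ N, JF.IsLoopAt x q) →
  ∀ K : Set (Branch F), (∀ b ∈ K, JF.IsBranch b ∧ b.startsAt x) →
  ∀ b ∈ StarKSet p (M ∪ N) K ∪ OmegaSet p (M ∪ N),
    (∃ bs ∈ OmegaSet p M ∪ OmegaSet p N ∪ PrepSet p K, I.val (B bs) ≤ I.val (B b)) ∧
    (∃ bu ∈ OmegaSet p M ∪ OmegaSet p N ∪ PrepSet p K, I.val (B b) ≤ I.val (B bu))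

/-! ### Concrete branch evaluations -/

/-- Supported (completion) branch evaluation: maps a branch to its second element. -/
def Bsp (JF : JFrame F) : Branch F → F
  | .fin l => l[1]?.getD JF.uLit
  | .inf s => s 1

/-- Kripke-Kleene branch evaluation. -/
def Bkk (JF : JFrame F) : Branch F → F
  | .fin l => l.getLastD JF.uLit
  | .inf _ => JF.uLit

/-- A sign function; `true` means positive, `false` negative. -/
structure SignFn (JF : JFrame F) where
  sgn : F → Bool
  sgn_compl : ∀ x ∈ JF.defined, sgn (JF.compl x) ≠ sgn x

/-- Well-founded branch evaluation. -/
noncomputable def Bwf (JF : JFrame F) (sg : SignFn JF) : Branch F → F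
  | .fin l => l.getLastD JF.uLit
  | .inf s =>
    if ∃ n, ∀ i ≥ n, sg.sgn (s i) = false then JF.tLit
    else if ∃ n, ∀ i ≥ n, sg.sgn (s i) = true then JF.fLit
    else JF.uLit

/-- Stable branch evaluation. -/
noncomputable def Bst (JF : JFrame F) (sg : SignFn JF) : Branch F → F
  | .fin l =>
    match l with
    | [] => JF.uLit
    | x0 :: rest =>
      match rest.find? (fun y => sg.sgn y != sg.sgn x0) with
      | some y => y
      | none => Bwf JF sg (.fin (x0 :: rest))
  | .inf s =>
    if h : ∃ i, sg.sgn (s i) ≠ sg.sgn (s 0) then s (Nat.find h)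
    else Bwf JF sg (.inf s)

end JT

/-!
Player 𝐅's positional strategy `τ` picks, at every rule symbol `y ← A`, an element of `A`.
For a fixed fact `y` these picks form a selection function `s_y` for `y`, so complementarity
provides the rule `~y ← ~Im(s_y)`. The successors of `~y` in the negated filtered play graph are
exactly `~Im(s_y)`, which makes this graph a graph-like justification; local completeness holds
because every defined fact has a rule and `τ` answers every rule symbol, and every node is
reached from `~x` along play edges, which gives the root and connectedness.
-/

namespace JT

variable {F : Type}

theorem GraphJust.IsRoot.connected {JF : JFrame F} {J : GraphJust JF} {x : F}
    (hx : J.IsRoot x) : J.Connected := by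
  intro a ha b hb
  refine Relation.ReflTransGen.trans (b := x) ?_ ?_
  · exact Relation.ReflTransGen.mono (fun _ _ h => Or.inr h) _ _
      (Relation.reflTransGen_swap.mpr (hx.2 a ha))
  · exact Relation.ReflTransGen.mono (fun _ _ h => Or.inl h) _ _ (hx.2 b hb)

theorem JFrame.compl_injective (JF : JFrame F) : Function.Injective JF.compl :=
  Function.LeftInverse.injective JF.compl_invol

theorem JFrame.compl_mem_defined_iff (JF : JFrame F) {y : F} :
    JF.compl y ∈ JF.defined ↔ y ∈ JF.defined :=
  ⟨fun h => JF.compl_invol y ▸ JF.defined_compl _ h, JF.defined_compl y⟩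

variable {JF : JFrame F}

theorem RuleSym.head_mem_defined (r : RuleSym JF) : r.1.1 ∈ JF.defined :=
  JF.rules_head r.1 r.2

@[simp]
theorem inl_mem_game_T (y : F) : (Sum.inl y : GState JF) ∈ JF.game.T := ⟨y, rfl⟩

@[simp]
theorem inr_not_mem_game_T (r : RuleSym JF) : (Sum.inr r : GState JF) ∉ JF.game.T := by
  rintro ⟨_, h⟩
  cases h

@[simp]
theorem inl_inl_not_mem_game_E (y z : F) :
    ((Sum.inl y : GState JF), (Sum.inl z : GState JF)) ∉ JF.game.E := by
  rintro (⟨_, _, h, _⟩ | ⟨_, _, h, _⟩) <;> simp at h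

@[simp]
theorem inr_inr_not_mem_game_E (r r' : RuleSym JF) :
    ((Sum.inr r : GState JF), (Sum.inr r' : GState JF)) ∉ JF.game.E := by
  rintro (⟨_, _, h, _⟩ | ⟨_, _, h, _⟩) <;> simp at h

@[simp]
theorem inl_inr_mem_game_E_iff {y : F} {r : RuleSym JF} :
    ((Sum.inl y : GState JF), Sum.inr r) ∈ JF.game.E ↔ r.1.1 = y := by
  constructor
  · rintro (⟨y', r', h, hr'⟩ | ⟨_, _, h, _⟩)
    · simp only [Prod.mk.injEq, Sum.inl.injEq, Sum.inr.injEq] at h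
      rw [h.1, h.2, hr']
    · simp at h
  · exact fun h => Or.inl ⟨y, r, rfl, h⟩

@[simp]
theorem inr_inl_mem_game_E_iff {r : RuleSym JF} {z : F} :
    ((Sum.inr r : GState JF), Sum.inl z) ∈ JF.game.E ↔ z ∈ r.1.2 := by
  constructor
  · rintro (⟨_, _, h, _⟩ | ⟨r', z', h, hz'⟩)
    · simp at h
    · simp only [Prod.mk.injEq, Sum.inr.injEq, Sum.inl.injEq] at h
      rwa [h.1, h.2]
  · exact fun h => Or.inr ⟨r, z, rfl, h⟩

theorem PosStrat.exists_move_inr_eq_inl (τ : PosStrat JF.game JF.game.Tᶜ) (r : RuleSym JF) :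
    ∃ z ∈ r.1.2, τ.move (Sum.inr r) = Sum.inl z := by
  obtain ⟨a, ha⟩ := JF.rules_body_ne r.1 r.2
  have hmove := τ.move_ok (Sum.inr r) (inr_not_mem_game_T r)
    ⟨Sum.inl a, inr_inl_mem_game_E_iff.mpr ha⟩
  rcases hmove' : τ.move (Sum.inr r) with z | r'
  · rw [hmove'] at hmove
    exact ⟨z, inr_inl_mem_game_E_iff.mp hmove, rfl⟩
  · rw [hmove'] at hmove
    exact absurd hmove (inr_inr_not_mem_game_E r r')

noncomputable def PosStrat.pick (τ : PosStrat JF.game JF.game.Tᶜ) (r : RuleSym JF) : F :=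
  (τ.exists_move_inr_eq_inl r).choose

theorem PosStrat.pick_mem (τ : PosStrat JF.game JF.game.Tᶜ) (r : RuleSym JF) :
    τ.pick r ∈ r.1.2 :=
  (τ.exists_move_inr_eq_inl r).choose_spec.1

theorem PosStrat.move_inr (τ : PosStrat JF.game JF.game.Tᶜ) (r : RuleSym JF) :
    τ.move (Sum.inr r) = Sum.inl (τ.pick r) :=
  (τ.exists_move_inr_eq_inl r).choose_spec.2

noncomputable def PosStrat.selectionFn (τ : PosStrat JF.game JF.game.Tᶜ) (y : F) :
    JF.SelectionFn y :=
  ⟨fun A => τ.pick ⟨(y, A.1), A.2⟩, fun A => τ.pick_mem ⟨(y, A.1), A.2⟩⟩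

variable (τ : PosStrat JF.game JF.game.Tᶜ)

@[simp]
theorem JFrame.stepF_inl_inr_iff {y : F} {r : RuleSym JF} :
    JF.stepF τ (Sum.inl y) (Sum.inr r) ↔ r.1.1 = y := by
  simp [stepF]

@[simp]
theorem JFrame.stepF_inr_inl_iff {r : RuleSym JF} {z : F} :
    JF.stepF τ (Sum.inr r) (Sum.inl z) ↔ z = τ.pick r := by
  simp only [stepF, inr_inl_mem_game_E_iff, Set.mem_compl_iff, inr_not_mem_game_T,
    not_false_eq_true, τ.move_inr, Sum.inl.injEq, forall_const]
  exact ⟨And.right, fun h => ⟨h ▸ τ.pick_mem r, h⟩⟩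

theorem JFrame.compl_mem_filtEdgesF_iff {x y w : F} :
    (JF.compl y, w) ∈ JF.filtEdgesF τ x ↔
      Sum.inl y ∈ JF.reachF τ x ∧ ∃ r : RuleSym JF, r.1.1 = y ∧ w = JF.compl (τ.pick r) := by
  constructor
  · rintro ⟨y', z, r, he, hy', hyr, hrz⟩
    simp only [Prod.mk.injEq] at he
    obtain rfl := JF.compl_injective he.1
    rw [stepF_inl_inr_iff] at hyr
    rw [stepF_inr_inl_iff] at hrz
    exact ⟨hy', r, hyr, hrz ▸ he.2⟩
  · rintro ⟨hy, r, rfl, rfl⟩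
    exact ⟨r.1.1, τ.pick r, r, rfl, hy, (stepF_inl_inr_iff τ).mpr rfl,
      (stepF_inr_inl_iff τ).mpr rfl⟩

def GState.fact : GState JF → F
  | .inl y => y
  | .inr r => r.1.1

/-- One round `y → (y ← A) → z` of the play is one edge `~y → ~z` of the filtered, negated
play graph. -/
theorem JFrame.reachF_fact {x : F} {s : GState JF} (hs : s ∈ JF.reachF τ x) :
    Sum.inl (GState.fact s) ∈ JF.reachF τ x ∧
      Relation.ReflTransGen (fun a b => (a, b) ∈ JF.filtEdgesF τ x)
        (JF.compl x) (JF.compl (GState.fact s)) := by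
  induction hs with
  | refl => exact ⟨Relation.ReflTransGen.refl, Relation.ReflTransGen.refl⟩
  | @tail b c hb hbc ih =>
    rcases b with y | r <;> rcases c with z | r'
    · simp [stepF] at hbc
    · rw [stepF_inl_inr_iff] at hbc
      simpa only [GState.fact, hbc] using ih
    · rw [stepF_inr_inl_iff] at hbc
      subst hbc
      have hedge : (JF.compl r.1.1, JF.compl (τ.pick r)) ∈ JF.filtEdgesF τ x :=
        (compl_mem_filtEdgesF_iff τ).mpr ⟨ih.1, r, rfl, rfl⟩
      exact ⟨Relation.ReflTransGen.tail hb ((stepF_inr_inl_iff τ).mpr rfl),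
        ih.2.tail hedge⟩
    · simp [stepF] at hbc

theorem JFrame.succ_filtEdgesF_eq {x y : F} (hy : Sum.inl y ∈ JF.reachF τ x) :
    {w | (JF.compl y, w) ∈ JF.filtEdgesF τ x} =
      JF.compl '' Set.range (τ.selectionFn y).1 := by
  ext w
  simp only [Set.mem_ofPred_eq, compl_mem_filtEdgesF_iff, hy, true_and, Set.mem_image,
    Set.mem_range, Subtype.exists]
  constructor
  · rintro ⟨r, rfl, rfl⟩
    exact ⟨_, ⟨r.1.2, r.2, rfl⟩, rfl⟩
  · rintro ⟨_, ⟨A, hA, rfl⟩, rfl⟩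
    exact ⟨⟨(y, A), hA⟩, rfl, rfl⟩

noncomputable def JFrame.negPlayJust (hc : JF.Complementary) (x : F) : GraphJust JF where
  nodes := JF.filtNodesF τ x
  edges := JF.filtEdgesF τ x
  edges_mem := by
    rintro _ ⟨y, z, r, rfl, hy, hyr, hrz⟩
    exact ⟨⟨y, rfl, hy⟩, ⟨z, rfl, (hy.tail hyr).tail hrz⟩⟩
  rule_of_internal := by
    rintro _ ⟨y, rfl, hy⟩ ⟨w, hw⟩
    obtain ⟨-, r, rfl, -⟩ := (compl_mem_filtEdgesF_iff τ).mp hw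
    rw [succ_filtEdgesF_eq τ hy]
    exact hc _ r.head_mem_defined _

theorem JFrame.negPlayJust_locallyComplete (hc : JF.Complementary) (x : F) :
    (negPlayJust τ hc x).LocallyComplete := by
  rintro _ ⟨y, rfl, hy⟩ hdef
  obtain ⟨A, hA⟩ := JF.rules_ex y (JF.compl_mem_defined_iff.mp hdef)
  exact ⟨_, (compl_mem_filtEdgesF_iff τ).mpr ⟨hy, ⟨(y, A), hA⟩, rfl, rfl⟩⟩

theorem JFrame.negPlayJust_isRoot (hc : JF.Complementary) (x : F) :
    (negPlayJust τ hc x).IsRoot (JF.compl x) := by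
  refine ⟨⟨x, rfl, Relation.ReflTransGen.refl⟩, ?_⟩
  rintro _ ⟨y, rfl, hy⟩
  exact (reachF_fact τ hy).2

theorem stmt4_general {F : Type} (JF : JFrame F) (hc : JF.Complementary)
    (τ : PosStrat JF.game JF.game.Tᶜ) (x : F) :
    ∃ J : GraphJust JF, J.nodes = JF.filtNodesF τ x ∧ J.edges = JF.filtEdgesF τ x ∧
      J.LocallyComplete ∧ J.Connected ∧ J.IsRoot (JF.compl x) :=
  ⟨JF.negPlayJust τ hc x, rfl, rfl, JF.negPlayJust_locallyComplete τ hc x,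
    (JF.negPlayJust_isRoot τ hc x).connected, JF.negPlayJust_isRoot τ hc x⟩

theorem stmt4 {F : Type} (JF : JFrame F) (hc : JF.Complementary)
    (τ : PosStrat JF.game JF.game.Tᶜ) (x : F) (hx : x ∈ JF.defined) :
    ∃ J : GraphJust JF, J.nodes = JF.filtNodesF τ x ∧ J.edges = JF.filtEdgesF τ x ∧
      J.LocallyComplete ∧ J.Connected ∧ J.IsRoot (JF.compl x) :=
  stmt4_general JF hc τ x

end JT
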